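/- arXiv:1103.3995 — 2 statements merged into one kernel-verified Lean document; each statement's English description precedes it below -/
import Mathlib

section
/- Let V = ℝ⁴ with the Chevalley–Eilenberg differential determined by de¹ = 0, de² = 0, de³ = 0, de⁴ = e¹∧e². Then every closed 2-form Ω ∈ Λ²V* (i.e. every Ω with dΩ = 0) satisfies Ω ∧ e¹ ∧ e² = 0. -/
/-- The basis covectors `e¹, …, e⁴` of `V*`, viewed as degree-one elements of the
exterior algebra `Λ(V*)`. -/
noncomputable def E (i : Fin 4) : ExteriorAlgebra ℝ (Fin 4 → ℝ) :=
  ExteriorAlgebra.ι ℝ (Pi.single i 1)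

/-- The Chevalley–Eilenberg differential on basis covectors for `Nil³ × ℝ`:
`de¹ = 0`, `de² = 0`, `de³ = 0`, `de⁴ = e¹∧e²`. -/
noncomputable def dE : Fin 4 → ExteriorAlgebra ℝ (Fin 4 → ℝ)
  | 0 => 0
  | 1 => 0
  | 2 => 0
  | 3 => E 0 * E 1

/-- The 2-form `∑_{i<j} c i j e^i ∧ e^j` with coefficients `c`. -/
noncomputable def twoForm (c : Fin 4 → Fin 4 → ℝ) : ExteriorAlgebra ℝ (Fin 4 → ℝ) :=
  ∑ i : Fin 4, ∑ j ∈ Finset.univ.filter (fun j => i < j), c i j • (E i * E j)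

/-- The Chevalley–Eilenberg differential of the 2-form `∑_{i<j} c i j e^i ∧ e^j`,
extended from degree one by the Leibniz rule `d(α∧β) = dα∧β - α∧dβ`. -/
noncomputable def dTwoForm (c : Fin 4 → Fin 4 → ℝ) : ExteriorAlgebra ℝ (Fin 4 → ℝ) :=
  ∑ i : Fin 4, ∑ j ∈ Finset.univ.filter (fun j => i < j),
    c i j • (dE i * E j - E i * dE j)


/-! Only `de⁴` is nonzero, so closedness of `Ω = ∑ cᵢⱼ eⁱ∧eʲ` says exactly
`c₃₄ e³∧e¹∧e² = 0` (`c₃₄` is `c 2 3`: Lean indices start at 0). In `Ω∧e¹∧e²` every term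
containing `e¹` or `e²` dies, leaving `c₃₄ e³∧e⁴∧e¹∧e² = (c₃₄ e³∧e¹∧e²)∧e⁴ = 0`, so one never
has to show that `c₃₄` itself vanishes. -/

namespace ExteriorAlgebra

variable {R M : Type*} [CommRing R] [AddCommGroup M] [Module R M]

theorem ι_mul_ι_anticomm (a b : M) : ι R a * ι R b = -(ι R b * ι R a) :=
  eq_neg_of_add_eq_zero_left (ι_add_mul_swap a b)

theorem ι_mul_ι_mul_ι_left (a b : M) : ι R a * (ι R a * ι R b) = 0 := by
  rw [← mul_assoc, ι_sq_zero, zero_mul]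

theorem ι_mul_ι_mul_ι_right (a b : M) : ι R b * (ι R a * ι R b) = 0 := by
  rw [ι_mul_ι_anticomm a b, mul_neg, ι_mul_ι_mul_ι_left, neg_zero]

theorem commute_ι_ι_mul_ι (m a b : M) : Commute (ι R m) (ι R a * ι R b) := by
  rw [Commute, SemiconjBy, ← mul_assoc, ι_mul_ι_anticomm m a, neg_mul, mul_assoc,
    ι_mul_ι_anticomm m b, mul_neg, neg_neg, mul_assoc]

end ExteriorAlgebra

theorem mul_mul_eq_zero_of_commute {A : Type*} [SemigroupWithZero A] {x y w : A}
    (hxw : x * w = 0) (hyw : Commute y w) : x * y * w = 0 := by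
  rw [mul_assoc, hyw.eq, ← mul_assoc, hxw, zero_mul]

theorem twoForm_eq (c : Fin 4 → Fin 4 → ℝ) :
    twoForm c = c 0 1 • (E 0 * E 1) + c 0 2 • (E 0 * E 2) + c 0 3 • (E 0 * E 3) +
      c 1 2 • (E 1 * E 2) + c 1 3 • (E 1 * E 3) + c 2 3 • (E 2 * E 3) := by
  simp [twoForm, Fin.sum_univ_four, Finset.sum_filter, add_assoc]

theorem dTwoForm_eq (c : Fin 4 → Fin 4 → ℝ) : dTwoForm c = -(c 2 3 • (E 2 * (E 0 * E 1))) := by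
  simp [dTwoForm, dE, Fin.sum_univ_four, Finset.sum_filter, E,
    ExteriorAlgebra.ι_mul_ι_mul_ι_left, ExteriorAlgebra.ι_mul_ι_mul_ι_right]

theorem twoForm_mul_E_zero_mul_E_one (c : Fin 4 → Fin 4 → ℝ) :
    twoForm c * (E 0 * E 1) = c 2 3 • (E 2 * (E 0 * E 1)) * E 3 := by
  set w := E 0 * E 1
  have hw0 : E 0 * w = 0 := ExteriorAlgebra.ι_mul_ι_mul_ι_left _ _
  have hw1 : E 1 * w = 0 := ExteriorAlgebra.ι_mul_ι_mul_ι_right _ _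
  have hcomm (i : Fin 4) : Commute (E i) w := ExteriorAlgebra.commute_ι_ι_mul_ι _ _ _
  have hvanish_left (i : Fin 4) {j : Fin 4} (hj : E j * w = 0) : E i * E j * w = 0 := by
    rw [mul_assoc, hj, mul_zero]
  have hvanish_right {i : Fin 4} (j : Fin 4) (hi : E i * w = 0) : E i * E j * w = 0 :=
    mul_mul_eq_zero_of_commute hi (hcomm j)
  rw [twoForm_eq]
  simp only [add_mul, smul_mul_assoc, hvanish_left 0 hw1, hvanish_right 2 hw0,
    hvanish_right 3 hw0, hvanish_right 2 hw1, hvanish_right 3 hw1, smul_zero, zero_add]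
  rw [mul_assoc, (hcomm 3).eq, ← mul_assoc]

/-- On the Lie algebra of `Nil³ × ℝ` (structure equations `de¹ = de² = de³ = 0`,
`de⁴ = e¹∧e²`), every closed 2-form `Ω` satisfies `Ω ∧ e¹ ∧ e² = 0`; that is, the
fibration `π_{xy}` of the Kodaira–Thurston manifold is Lagrangian for every invariant
symplectic form. -/
theorem lagrangian_fibration (c : Fin 4 → Fin 4 → ℝ)
    (Ω : ExteriorAlgebra ℝ (Fin 4 → ℝ)) (hΩ : Ω = twoForm c)
    (hclosed : dTwoForm c = 0) :
    Ω * (E 0 * E 1) = 0 := by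
  rw [dTwoForm_eq, neg_eq_zero] at hclosed
  rw [hΩ, twoForm_mul_E_zero_mul_E_one, hclosed, zero_mul]
end

section
/- Let a, b, c and (l_ij), (m_ij) and F be as in the generalized Monge–Ampère setup, and assume the normalization ∫_{𝕋²} e^F = ab − c². For t ∈ [0,1] and a twice continuously differentiable biperiodic function p, define S_t(p) = (a + p_xx − t·l₁₁p_x − t·m₁₁p_y)(b + p_yy − t·l₂₂p_x − t·m₂₂p_y) − (c + p_xy − t·l₁₂p_x − t·m₁₂p_y)² − (t·e^F + (1−t)(ab − c²)). Then for every t ∈ [0,1] and every smooth biperiodic p, ∫_{𝕋²} S_t(p) = 0. -/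
open MeasureTheory

/-- Partial derivative in the first variable. -/
noncomputable def pdx (p : ℝ × ℝ → ℝ) (z : ℝ × ℝ) : ℝ := fderiv ℝ p z (1, 0)

/-- Partial derivative in the second variable. -/
noncomputable def pdy (p : ℝ × ℝ → ℝ) (z : ℝ × ℝ) : ℝ := fderiv ℝ p z (0, 1)

/-- A function `ℝ² → ℝ` is biperiodic if it has period 1 in each variable. -/
def Biperiodic (p : ℝ × ℝ → ℝ) : Prop :=
  ∀ x y : ℝ, p (x + 1, y) = p (x, y) ∧ p (x, y + 1) = p (x, y)

/-- The integral over the torus `𝕋² = ℝ²/ℤ²` of (the descent of) a biperiodic function. -/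
noncomputable def torusInt (f : ℝ × ℝ → ℝ) : ℝ := ∫ x in (0:ℝ)..1, ∫ y in (0:ℝ)..1, f (x, y)

/-!
Once the conditions on `l` and `m` cancel the terms that are quadratic in `∇p`, the integrand
`S_t(p)` is `t (ab - c² - e^F)` plus a sum of derivatives `∂ₓu`, `∂ᵧv` of smooth biperiodic
functions, each integrating to zero over a period. Besides the second derivatives and the
products `∂ᵢp ∂ⱼ∂ₖp` (e.g. `p_y p_xx = (p_x p_y)_x - ½ (p_x²)_y`), this includes the Hessian
determinant `p_xx p_yy - p_xy² = (p_x p_yy)_x - (p_x p_xy)_y`. The normalization of `F` disposes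
of the remaining term.
-/

open scoped ContDiff
open Set

variable {p q f g : ℝ × ℝ → ℝ} {z : ℝ × ℝ} {n : WithTop ℕ∞}

theorem ContDiff.pdx (hp : ContDiff ℝ (n + 1) p) : ContDiff ℝ n (pdx p) :=
  (hp.fderiv_right le_rfl).clm_apply contDiff_const

theorem ContDiff.pdy (hp : ContDiff ℝ (n + 1) p) : ContDiff ℝ n (pdy p) :=
  (hp.fderiv_right le_rfl).clm_apply contDiff_const

theorem pdy_pdx_comm (hp : ContDiff ℝ 2 p) : pdy (pdx p) = pdx (pdy p) := by
  funext z
  have hd : DifferentiableAt ℝ (fderiv ℝ p) z :=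
    (hp.fderiv_right (m := 1) le_rfl).differentiable one_ne_zero z
  have hsymm : IsSymmSndFDerivAt ℝ p z :=
    hp.contDiffAt.isSymmSndFDerivAt (by simp [minSmoothness_of_isRCLikeNormedField])
  change fderiv ℝ (fun w => fderiv ℝ p w (1, 0)) z (0, 1) =
    fderiv ℝ (fun w => fderiv ℝ p w (0, 1)) z (1, 0)
  simp only [fderiv_clm_apply hd (differentiableAt_const _)]
  simpa using hsymm (0, 1) (1, 0)

theorem pdx_mul (hp : DifferentiableAt ℝ p z) (hq : DifferentiableAt ℝ q z) :
    pdx (p * q) z = pdx p z * q z + p z * pdx q z := by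
  simp only [pdx, fderiv_mul hp hq, add_apply, smul_apply, smul_eq_mul]
  ring

theorem pdy_mul (hp : DifferentiableAt ℝ p z) (hq : DifferentiableAt ℝ q z) :
    pdy (p * q) z = pdy p z * q z + p z * pdy q z := by
  simp only [pdy, fderiv_mul hp hq, add_apply, smul_apply, smul_eq_mul]
  ring

theorem hasDerivAt_pdx {x y : ℝ} (hp : DifferentiableAt ℝ p (x, y)) :
    HasDerivAt (fun s => p (s, y)) (pdx p (x, y)) x :=
  hp.hasFDerivAt.comp_hasDerivAt x ((hasDerivAt_id x).prodMk (hasDerivAt_const x y))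

theorem hasDerivAt_pdy {x y : ℝ} (hp : DifferentiableAt ℝ p (x, y)) :
    HasDerivAt (fun s => p (x, s)) (pdy p (x, y)) y :=
  hp.hasFDerivAt.comp_hasDerivAt y ((hasDerivAt_const y x).prodMk (hasDerivAt_id y))

theorem Biperiodic.fderiv_apply (hp : Biperiodic p) (v : ℝ × ℝ) :
    Biperiodic (fun z => fderiv ℝ p z v) := by
  have h₁ : (fun w => p (w + ((1 : ℝ), (0 : ℝ)))) = p := funext fun w => by
    rw [show w + ((1 : ℝ), (0 : ℝ)) = (w.1 + 1, w.2) from Prod.ext rfl (add_zero _)]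
    exact (hp w.1 w.2).1
  have h₂ : (fun w => p (w + ((0 : ℝ), (1 : ℝ)))) = p := funext fun w => by
    rw [show w + ((0 : ℝ), (1 : ℝ)) = (w.1, w.2 + 1) from Prod.ext (add_zero _) rfl]
    exact (hp w.1 w.2).2
  intro x y
  have e₁ := fderiv_comp_add_right (𝕜 := ℝ) (f := p) (x := (x, y)) ((1 : ℝ), (0 : ℝ))
  have e₂ := fderiv_comp_add_right (𝕜 := ℝ) (f := p) (x := (x, y)) ((0 : ℝ), (1 : ℝ))
  rw [h₁, Prod.mk_add_mk, add_zero] at e₁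
  rw [h₂, Prod.mk_add_mk, add_zero] at e₂
  simp only [← e₁, ← e₂, and_self]

theorem Biperiodic.add (hp : Biperiodic p) (hq : Biperiodic q) : Biperiodic (p + q) :=
  fun x y => ⟨by simp [(hp x y).1, (hq x y).1], by simp [(hp x y).2, (hq x y).2]⟩

theorem Biperiodic.mul (hp : Biperiodic p) (hq : Biperiodic q) : Biperiodic (p * q) :=
  fun x y => ⟨by simp [(hp x y).1, (hq x y).1], by simp [(hp x y).2, (hq x y).2]⟩

def smoothBiperiodic : Subalgebra ℝ (ℝ × ℝ → ℝ) where
  carrier := {p | ContDiff ℝ ∞ p ∧ Biperiodic p}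
  mul_mem' hp hq := ⟨hp.1.mul hq.1, hp.2.mul hq.2⟩
  add_mem' hp hq := ⟨hp.1.add hq.1, hp.2.add hq.2⟩
  algebraMap_mem' _ := ⟨contDiff_const, fun _ _ => ⟨rfl, rfl⟩⟩

theorem pdx_mem_smoothBiperiodic (hp : p ∈ smoothBiperiodic) : pdx p ∈ smoothBiperiodic :=
  ⟨ContDiff.pdx (n := ∞) hp.1, hp.2.fderiv_apply _⟩

theorem pdy_mem_smoothBiperiodic (hp : p ∈ smoothBiperiodic) : pdy p ∈ smoothBiperiodic :=
  ⟨ContDiff.pdy (n := ∞) hp.1, hp.2.fderiv_apply _⟩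

theorem Continuous.integrableOn_Ioc_prod_Ioc (hf : Continuous f) (a b c d : ℝ) :
    IntegrableOn f (Ioc a b ×ˢ Ioc c d) :=
  (hf.continuousOn.integrableOn_compact (isCompact_Icc.prod isCompact_Icc)).mono_set
    (prod_mono Ioc_subset_Icc_self Ioc_subset_Icc_self)

theorem torusInt_eq_setIntegral (hf : Continuous f) :
    torusInt f = ∫ z in Ioc (0:ℝ) 1 ×ˢ Ioc (0:ℝ) 1, f z := by
  rw [Measure.volume_eq_prod, setIntegral_prod f (hf.integrableOn_Ioc_prod_Ioc 0 1 0 1)]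
  simp only [torusInt, intervalIntegral.integral_of_le zero_le_one]

theorem torusInt_eq_integral_swap (hf : Continuous f) :
    torusInt f = ∫ y in (0:ℝ)..1, ∫ x in (0:ℝ)..1, f (x, y) :=
  intervalIntegral_intervalIntegral_swap <| by
    simpa only [uIoc_of_le zero_le_one, Function.uncurry_def] using
      hf.integrableOn_Ioc_prod_Ioc 0 1 0 1

theorem torusInt_add (hf : Continuous f) (hg : Continuous g) :
    torusInt (f + g) = torusInt f + torusInt g := by
  simp only [torusInt_eq_setIntegral, hf, hg, hf.add hg]
  exact integral_add (hf.integrableOn_Ioc_prod_Ioc 0 1 0 1) (hg.integrableOn_Ioc_prod_Ioc 0 1 0 1)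

theorem torusInt_sub (hf : Continuous f) (hg : Continuous g) :
    torusInt (f - g) = torusInt f - torusInt g := by
  simp only [torusInt_eq_setIntegral, hf, hg, hf.sub hg]
  exact integral_sub (hf.integrableOn_Ioc_prod_Ioc 0 1 0 1) (hg.integrableOn_Ioc_prod_Ioc 0 1 0 1)

theorem torusInt_smul (c : ℝ) (f : ℝ × ℝ → ℝ) : torusInt (c • f) = c * torusInt f := by
  simp only [torusInt, Pi.smul_apply, smul_eq_mul, intervalIntegral.integral_const_mul]

theorem torusInt_const (c : ℝ) : torusInt (fun _ => c) = c := by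
  simp [torusInt]

/-- Continuity is what makes `torusInt` additive here; for arbitrary functions the iterated
integral takes junk values. -/
def torusMeanZero : Submodule ℝ (ℝ × ℝ → ℝ) where
  carrier := {f | Continuous f ∧ torusInt f = 0}
  add_mem' hf hg := ⟨hf.1.add hg.1, by rw [torusInt_add hf.1 hg.1, hf.2, hg.2, add_zero]⟩
  zero_mem' := ⟨continuous_const, torusInt_const 0⟩
  smul_mem' c _ hf := ⟨hf.1.const_smul c, by rw [torusInt_smul, hf.2, mul_zero]⟩

theorem pdx_mem_torusMeanZero (hp : ContDiff ℝ 1 p) (hper : Biperiodic p) :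
    pdx p ∈ torusMeanZero := by
  have hc : Continuous (pdx p) := (ContDiff.pdx (n := 0) hp).continuous
  refine ⟨hc, ?_⟩
  have hline (y : ℝ) : ∫ x in (0:ℝ)..1, pdx p (x, y) = 0 := by
    rw [intervalIntegral.integral_eq_sub_of_hasDerivAt
      (fun x _ => hasDerivAt_pdx (hp.differentiable one_ne_zero _))
      ((hc.comp (continuous_id.prodMk continuous_const)).intervalIntegrable 0 1)]
    simpa using sub_eq_zero.2 (hper 0 y).1
  simp only [torusInt_eq_integral_swap hc, hline, intervalIntegral.integral_zero]

theorem pdy_mem_torusMeanZero (hp : ContDiff ℝ 1 p) (hper : Biperiodic p) :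
    pdy p ∈ torusMeanZero := by
  have hc : Continuous (pdy p) := (ContDiff.pdy (n := 0) hp).continuous
  refine ⟨hc, ?_⟩
  have hline (x : ℝ) : ∫ y in (0:ℝ)..1, pdy p (x, y) = 0 := by
    rw [intervalIntegral.integral_eq_sub_of_hasDerivAt
      (fun y _ => hasDerivAt_pdy (hp.differentiable one_ne_zero _))
      ((hc.comp (continuous_const.prodMk continuous_id)).intervalIntegrable 0 1)]
    simpa using sub_eq_zero.2 (hper x 0).2
  simp only [torusInt, hline, intervalIntegral.integral_zero]

theorem pdx_mem_torusMeanZero_of_mem (hp : p ∈ smoothBiperiodic) : pdx p ∈ torusMeanZero :=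
  pdx_mem_torusMeanZero (contDiff_infty.1 hp.1 1) hp.2

theorem pdy_mem_torusMeanZero_of_mem (hp : p ∈ smoothBiperiodic) : pdy p ∈ torusMeanZero :=
  pdy_mem_torusMeanZero (contDiff_infty.1 hp.1 1) hp.2

theorem pdx_mul_add_mul_pdx_mem_torusMeanZero (hp : p ∈ smoothBiperiodic)
    (hq : q ∈ smoothBiperiodic) : pdx p * q + p * pdx q ∈ torusMeanZero := by
  convert pdx_mem_torusMeanZero_of_mem (mul_mem hp hq) using 1
  funext z
  exact (pdx_mul (hp.1.differentiable (by simp) z) (hq.1.differentiable (by simp) z)).symm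

theorem pdy_mul_add_mul_pdy_mem_torusMeanZero (hp : p ∈ smoothBiperiodic)
    (hq : q ∈ smoothBiperiodic) : pdy p * q + p * pdy q ∈ torusMeanZero := by
  convert pdy_mem_torusMeanZero_of_mem (mul_mem hp hq) using 1
  funext z
  exact (pdy_mul (hp.1.differentiable (by simp) z) (hq.1.differentiable (by simp) z)).symm

theorem mul_pdx_self_mem_torusMeanZero (hp : p ∈ smoothBiperiodic) :
    p * pdx p ∈ torusMeanZero := by
  convert torusMeanZero.smul_mem (1 / 2 : ℝ) (pdx_mul_add_mul_pdx_mem_torusMeanZero hp hp) using 1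
  funext z
  simp only [Pi.smul_apply, Pi.add_apply, Pi.mul_apply, smul_eq_mul]
  ring

theorem mul_pdy_self_mem_torusMeanZero (hp : p ∈ smoothBiperiodic) :
    p * pdy p ∈ torusMeanZero := by
  convert torusMeanZero.smul_mem (1 / 2 : ℝ) (pdy_mul_add_mul_pdy_mem_torusMeanZero hp hp) using 1
  funext z
  simp only [Pi.smul_apply, Pi.add_apply, Pi.mul_apply, smul_eq_mul]
  ring

theorem pdy_mul_pdx_pdx_mem_torusMeanZero (hp : p ∈ smoothBiperiodic) :
    pdy p * pdx (pdx p) ∈ torusMeanZero := by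
  have hX := pdx_mem_smoothBiperiodic hp
  have hY := pdy_mem_smoothBiperiodic hp
  convert sub_mem (pdx_mul_add_mul_pdx_mem_torusMeanZero hX hY)
    (mul_pdy_self_mem_torusMeanZero hX) using 1
  rw [← pdy_pdx_comm (contDiff_infty.1 hp.1 2)]
  ring

theorem pdx_mul_pdy_pdy_mem_torusMeanZero (hp : p ∈ smoothBiperiodic) :
    pdx p * pdy (pdy p) ∈ torusMeanZero := by
  have hX := pdx_mem_smoothBiperiodic hp
  have hY := pdy_mem_smoothBiperiodic hp
  convert sub_mem (pdy_mul_add_mul_pdy_mem_torusMeanZero hX hY)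
    (mul_pdx_self_mem_torusMeanZero hY) using 1
  rw [pdy_pdx_comm (contDiff_infty.1 hp.1 2)]
  ring

theorem hessian_det_mem_torusMeanZero (hp : p ∈ smoothBiperiodic) :
    pdx (pdx p) * pdy (pdy p) - pdy (pdx p) ^ 2 ∈ torusMeanZero := by
  have hX := pdx_mem_smoothBiperiodic hp
  have hY := pdy_mem_smoothBiperiodic hp
  convert sub_mem (pdx_mul_add_mul_pdx_mem_torusMeanZero hX (pdy_mem_smoothBiperiodic hY))
    (pdy_mul_add_mul_pdy_mem_torusMeanZero hX (pdx_mem_smoothBiperiodic hY)) using 1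
  rw [pdy_pdx_comm (contDiff_infty.1 hp.1 2), pdy_pdx_comm (contDiff_infty.1 hY.1 2)]
  ring

theorem St_integrates_to_zero_general (a b c l11 l12 l22 m11 m12 m22 : ℝ)
    (h2 : l11 * l22 - l12 ^ 2 = 0)
    (h3 : m11 * m22 - m12 ^ 2 = 0)
    (h4 : l11 * m22 + l22 * m11 - 2 * l12 * m12 = 0)
    (F : ℝ × ℝ → ℝ) (hF : ContDiff ℝ (⊤ : ℕ∞) F)
    (hnorm : torusInt (fun z => Real.exp (F z)) = a * b - c ^ 2) :
    ∀ t : ℝ, t ∈ Set.Icc (0:ℝ) 1 →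
      ∀ p : ℝ × ℝ → ℝ, ContDiff ℝ (⊤ : ℕ∞) p → Biperiodic p →
        torusInt (fun z =>
          (a + pdx (pdx p) z - t * l11 * pdx p z - t * m11 * pdy p z) *
              (b + pdy (pdy p) z - t * l22 * pdx p z - t * m22 * pdy p z) -
            (c + pdy (pdx p) z - t * l12 * pdx p z - t * m12 * pdy p z) ^ 2 -
            (t * Real.exp (F z) + (1 - t) * (a * b - c ^ 2))) = 0 := by
  intro t _ p hp hper
  have hpS : p ∈ smoothBiperiodic := ⟨hp, hper⟩
  have hXS := pdx_mem_smoothBiperiodic hpS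
  have hYS := pdy_mem_smoothBiperiodic hpS
  set X := pdx p
  set Y := pdy p
  have hXY : pdy X = pdx Y := pdy_pdx_comm (contDiff_infty.1 hp 2)
  have hsecond : b • pdx X + a • pdy Y - (2 * c) • pdy X ∈ torusMeanZero := by
    apply_rules [sub_mem, add_mem, Submodule.smul_mem, pdx_mem_torusMeanZero_of_mem,
      pdy_mem_torusMeanZero_of_mem]
  have hfirst : (a * l22 + b * l11 - 2 * c * l12) • X + (a * m22 + b * m11 - 2 * c * m12) • Y
      ∈ torusMeanZero := by
    apply_rules [add_mem, Submodule.smul_mem, pdx_mem_torusMeanZero_of_mem,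
      pdy_mem_torusMeanZero_of_mem]
  have hquad : (2 * l12) • (X * pdy X) + (2 * m12) • (Y * pdx Y) - l22 • (X * pdx X)
      - m11 • (Y * pdy Y) - m22 • (Y * pdx X) - l11 • (X * pdy Y) ∈ torusMeanZero := by
    apply_rules [sub_mem, add_mem, Submodule.smul_mem, mul_pdx_self_mem_torusMeanZero,
      mul_pdy_self_mem_torusMeanZero, pdy_mul_pdx_pdx_mem_torusMeanZero,
      pdx_mul_pdy_pdy_mem_torusMeanZero]
  have hhess : pdx X * pdy Y - pdy X ^ 2 ∈ torusMeanZero := hessian_det_mem_torusMeanZero hpS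
  have hexp : t • ((fun _ => a * b - c ^ 2) - fun z => Real.exp (F z)) ∈ torusMeanZero := by
    have hE : Continuous fun z => Real.exp (F z) := Real.continuous_exp.comp hF.continuous
    refine torusMeanZero.smul_mem t ⟨continuous_const.sub hE, ?_⟩
    rw [torusInt_sub continuous_const hE, torusInt_const, hnorm, sub_self]
  convert (add_mem (add_mem (add_mem hsecond hhess)
    (torusMeanZero.smul_mem t (sub_mem hquad hfirst))) hexp).2 using 2
  funext z
  simp only [Pi.add_apply, Pi.sub_apply, Pi.smul_apply, Pi.mul_apply, Pi.pow_apply, smul_eq_mul,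
    hXY]
  linear_combination (t ^ 2 * X z ^ 2) * h2 + (t ^ 2 * Y z ^ 2) * h3 + (t ^ 2 * (X z * Y z)) * h4

/-- For the continuity method: under the normalization `∫ e^F = ab - c²`, the operator
`S_t` maps (smooth biperiodic functions, identified with functions on the torus) into
functions with zero mean, for every `t ∈ [0,1]`. -/
theorem St_integrates_to_zero (a b c l11 l12 l22 m11 m12 m22 : ℝ)
    (hpd : (!![a, c; c, b]).PosDef)
    (h1 : m11 * l22 = 0)
    (h2 : l11 * l22 - l12 ^ 2 = 0)
    (h3 : m11 * m22 - m12 ^ 2 = 0)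
    (h4 : l11 * m22 + l22 * m11 - 2 * l12 * m12 = 0)
    (F : ℝ × ℝ → ℝ) (hF : ContDiff ℝ (⊤ : ℕ∞) F) (hFper : Biperiodic F)
    (hnorm : torusInt (fun z => Real.exp (F z)) = a * b - c ^ 2) :
    ∀ t : ℝ, t ∈ Set.Icc (0:ℝ) 1 →
      ∀ p : ℝ × ℝ → ℝ, ContDiff ℝ (⊤ : ℕ∞) p → Biperiodic p →
        torusInt (fun z =>
          (a + pdx (pdx p) z - t * l11 * pdx p z - t * m11 * pdy p z) *
              (b + pdy (pdy p) z - t * l22 * pdx p z - t * m22 * pdy p z) -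
            (c + pdy (pdx p) z - t * l12 * pdx p z - t * m12 * pdy p z) ^ 2 -
            (t * Real.exp (F z) + (1 - t) * (a * b - c ^ 2))) = 0 :=
  St_integrates_to_zero_general a b c l11 l12 l22 m11 m12 m22 h2 h3 h4 F hF hnorm
end
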